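/- Let Σ = (X, Y, M(U), φ, h) be a linear control system that is exponentially stable with constants M, σ > 0 and robust with respect to the input with nondecreasing function b. Then for every T > (1/σ)·ln(M), the minimum IOS-gain satisfies γ ≤ ( (1 + M·(1 − e^{−σT})) / (1 − M·e^{−σT}) )·b(T); in particular γ < +∞. -/

import Mathlib

open Filter

noncomputable section

/-- A linear control system `Σ = (X, Y, M(U), φ, h)` in the sense of
Karafyllis, "On the Relation of IOS-Gains and Asymptotic Gains For Linear Systems".
Inputs are functions `u : ℝ → U`; only values on `[0, ∞)` are relevant. -/
structure LinearControlSystem (X Y U : Type*)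
    [NormedAddCommGroup X] [NormedSpace ℝ X]
    [NormedAddCommGroup Y] [NormedSpace ℝ Y]
    [NormedAddCommGroup U] [NormedSpace ℝ U] where
  /-- the set `M(U)` of admissible inputs -/
  inputs : Set (ℝ → U)
  /-- the transition map `φ` -/
  trans : ℝ → X → (ℝ → U) → X
  /-- the continuous linear output map `h : X → Y` -/
  out : X →L[ℝ] Y
  /-- `U ≠ {0}` -/
  U_nontrivial : ∃ v : U, v ≠ 0
  /-- inputs are locally bounded -/
  loc_bdd : ∀ u ∈ inputs, ∀ T : ℝ, BddAbove ((fun s => ‖u s‖) '' Set.Icc 0 T)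
  zero_mem : (0 : ℝ → U) ∈ inputs
  add_mem : ∀ u₁ ∈ inputs, ∀ u₂ ∈ inputs, u₁ + u₂ ∈ inputs
  smul_mem : ∀ u ∈ inputs, ∀ c : ℝ, c • u ∈ inputs
  concat_le_mem : ∀ u₁ ∈ inputs, ∀ u₂ ∈ inputs, ∀ τ > (0 : ℝ),
    (fun t => if t ≤ τ then u₁ t else u₂ (t - τ)) ∈ inputs
  concat_lt_mem : ∀ u₁ ∈ inputs, ∀ u₂ ∈ inputs, ∀ τ > (0 : ℝ),
    (fun t => if t < τ then u₁ t else u₂ (t - τ)) ∈ inputs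
  /-- closure under the shift operator `δ_τ` -/
  shift_mem : ∀ u ∈ inputs, ∀ τ > (0 : ℝ), (fun t => u (t + τ)) ∈ inputs
  exists_input_val : ∀ v : U, ∃ u ∈ inputs, u 0 = v
  /-- closure under `T`-periodic extension -/
  periodic_ext_mem : ∀ u ∈ inputs, ∀ T > (0 : ℝ),
    (fun t => u (t - T * ⌊t / T⌋)) ∈ inputs
  identity : ∀ x : X, ∀ u ∈ inputs, trans 0 x u = x
  causality : ∀ t ≥ (0 : ℝ), ∀ x : X, ∀ u ∈ inputs, ∀ v ∈ inputs,
    (∀ s, 0 ≤ s → s ≤ t → u s = v s) → trans t x u = trans t x v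
  semigroup : ∀ x : X, ∀ u ∈ inputs, ∀ τ t : ℝ, 0 ≤ τ → τ ≤ t →
    trans t x u = trans (t - τ) (trans τ x u) (fun s => u (s + τ))
  linearity : ∀ t ≥ (0 : ℝ), ∀ x₁ x₂ : X, ∀ u₁ ∈ inputs, ∀ u₂ ∈ inputs, ∀ a b : ℝ,
    trans t (a • x₁ + b • x₂) (a • u₁ + b • u₂) = a • trans t x₁ u₁ + b • trans t x₂ u₂

namespace LinearControlSystem

variable {X Y U : Type*}
    [NormedAddCommGroup X] [NormedSpace ℝ X]
    [NormedAddCommGroup Y] [NormedSpace ℝ Y]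
    [NormedAddCommGroup U] [NormedSpace ℝ U]

/-- `sup_{0 ≤ s ≤ t} ‖u(s)‖`. -/
def runSup (u : ℝ → U) (t : ℝ) : ℝ :=
  sSup ((fun s => ‖u s‖) '' Set.Icc 0 t)

/-- `sup_{s ≥ 0} ‖u(s)‖`. -/
def supNorm (u : ℝ → U) : ℝ :=
  sSup ((fun s => ‖u s‖) '' Set.Ici 0)

/-- exponential stability with the specific constants `M, σ > 0` -/
def IsES (sys : LinearControlSystem X Y U) (M σ : ℝ) : Prop :=
  0 < M ∧ 0 < σ ∧ ∀ x : X, ∀ t ≥ (0 : ℝ),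
    ‖sys.trans t x 0‖ ≤ M * Real.exp (-σ * t) * ‖x‖

/-- exponential stability (ES) -/
def ES (sys : LinearControlSystem X Y U) : Prop :=
  ∃ M σ : ℝ, sys.IsES M σ

/-- robustness with respect to the input, with the specific nondecreasing function `b` -/
def IsRobust (sys : LinearControlSystem X Y U) (b : ℝ → ℝ) : Prop :=
  MonotoneOn b (Set.Ici 0) ∧ (∀ t, 0 ≤ b t) ∧
    ∀ u ∈ sys.inputs, ∀ t ≥ (0 : ℝ), ‖sys.trans t 0 u‖ ≤ b t * runSup u t

/-- robustness with respect to the input -/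
def Robust (sys : LinearControlSystem X Y U) : Prop :=
  ∃ b : ℝ → ℝ, sys.IsRobust b

/-- strict causality -/
def StrictlyCausal (sys : LinearControlSystem X Y U) : Prop :=
  ∀ t > (0 : ℝ), ∀ u ∈ sys.inputs, ∀ v ∈ sys.inputs,
    (∀ s, 0 ≤ s → s < t → u s = v s) → sys.trans t 0 u = sys.trans t 0 v

/-- the minimum IOS-gain `γ` -/
def gain (sys : LinearControlSystem X Y U) : ℝ :=
  sSup {r | ∃ t ≥ (0 : ℝ), ∃ u ∈ sys.inputs, runSup u t = 1 ∧ r = ‖sys.out (sys.trans t 0 u)‖}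

/-- the minimum output asymptotic gain `γ_as` -/
def asympGain (sys : LinearControlSystem X Y U) : ℝ :=
  sSup {r | ∃ u ∈ sys.inputs, supNorm u = 1 ∧
    r = limsup (fun t => ‖sys.out (sys.trans t 0 u)‖) atTop}

/-- the value `V(T)` of the optimal control problem (4.5) -/
def V (sys : LinearControlSystem X Y U) (T : ℝ) : ℝ :=
  sSup {r | ∃ u ∈ sys.inputs, runSup u T = 1 ∧ r = ‖sys.out (sys.trans T 0 u)‖}

/-- periodic inputs -/
def Periodic (u : ℝ → U) : Prop :=
  ∃ T > (0 : ℝ), ∀ t ≥ (0 : ℝ), u (t + T) = u t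

end LinearControlSystem

/-!
Fix a horizon `T > 0` with `q := M e^{-σT} < 1`. By the semigroup property and linearity, the
state reached from `0` at time `t ≥ T` is the free evolution over `[t - T, t]` of the state at
time `t - T`, plus the response over `[t - T, t]` to the shifted input. The first term is at most
`q` times the earlier state, the second at most `b(T)` times the running supremum of the input.
Iterating over the intervals `[kT, (k+1)T]` gives the geometric bound
`‖φ(t, 0, u)‖ ≤ b(T) / (1 - q) · sup_{[0,t]} ‖u‖`, and `b(T) / (1 - q)` is at most the stated
constant. If `M < 1`, exponential stability at `t = 0` forces the state space to be trivial.
-/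

open Real

namespace LinearControlSystem

section RunSup

variable {U : Type*} [NormedAddCommGroup U] {u : ℝ → U} {s t τ : ℝ}

lemma runSup_nonneg (u : ℝ → U) (t : ℝ) : 0 ≤ runSup u t :=
  Real.sSup_nonneg (by rintro _ ⟨s, -, rfl⟩; exact norm_nonneg _)

lemma norm_le_runSup (hu : BddAbove ((fun s => ‖u s‖) '' Set.Icc 0 t)) (hs : s ∈ Set.Icc 0 t) :
    ‖u s‖ ≤ runSup u t :=
  le_csSup hu (Set.mem_image_of_mem _ hs)

lemma runSup_mono (hu : BddAbove ((fun s => ‖u s‖) '' Set.Icc 0 t)) (hst : s ≤ t) :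
    runSup u s ≤ runSup u t :=
  Real.sSup_le (by rintro _ ⟨r, hr, rfl⟩; exact norm_le_runSup hu ⟨hr.1, hr.2.trans hst⟩)
    (runSup_nonneg u t)

lemma runSup_shift_le (hu : BddAbove ((fun s => ‖u s‖) '' Set.Icc 0 t)) (hτ : 0 ≤ τ) :
    runSup (fun s => u (s + τ)) (t - τ) ≤ runSup u t :=
  Real.sSup_le
    (by rintro _ ⟨r, hr, rfl⟩; exact norm_le_runSup hu ⟨by linarith [hr.1], by linarith [hr.2]⟩)
    (runSup_nonneg u t)

end RunSup

variable {X Y U : Type*}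
    [NormedAddCommGroup X] [NormedSpace ℝ X]
    [NormedAddCommGroup Y] [NormedSpace ℝ Y]
    [NormedAddCommGroup U] [NormedSpace ℝ U]

variable (sys : LinearControlSystem X Y U)

lemma shift_mem_of_nonneg {u : ℝ → U} (hu : u ∈ sys.inputs) {τ : ℝ} (hτ : 0 ≤ τ) :
    (fun t => u (t + τ)) ∈ sys.inputs := by
  rcases hτ.eq_or_lt with rfl | hτ
  · simpa using hu
  · exact sys.shift_mem u hu τ hτ

lemma trans_eq_trans_zero_add {t : ℝ} (ht : 0 ≤ t) (x : X) {u : ℝ → U} (hu : u ∈ sys.inputs) :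
    sys.trans t x u = sys.trans t x 0 + sys.trans t 0 u := by
  simpa using sys.linearity t ht x 0 0 sys.zero_mem u hu 1 1

lemma trans_eq_trans_zero_add_of_le {u : ℝ → U} (hu : u ∈ sys.inputs) {τ t : ℝ}
    (hτ : 0 ≤ τ) (hτt : τ ≤ t) :
    sys.trans t 0 u = sys.trans (t - τ) (sys.trans τ 0 u) 0 +
      sys.trans (t - τ) 0 (fun s => u (s + τ)) := by
  rw [sys.semigroup 0 u hu τ t hτ hτt,
    sys.trans_eq_trans_zero_add (sub_nonneg.2 hτt) _ (sys.shift_mem_of_nonneg hu hτ)]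

variable {sys}

lemma IsES.eq_zero_of_lt_one {M σ : ℝ} (hES : sys.IsES M σ) (hM : M < 1) (x : X) : x = 0 := by
  have h := hES.2.2 x 0 le_rfl
  rw [sys.identity x 0 sys.zero_mem] at h
  simp only [mul_zero, Real.exp_zero, mul_one] at h
  exact norm_eq_zero.1 (by nlinarith [norm_nonneg x])

lemma norm_trans_le_of_le {M σ : ℝ} {b : ℝ → ℝ} (hES : sys.IsES M σ) (hrob : sys.IsRobust b)
    {T t : ℝ} (hT : 0 ≤ T) (hTt : T ≤ t) {u : ℝ → U} (hu : u ∈ sys.inputs) :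
    ‖sys.trans t 0 u‖ ≤
      M * exp (-σ * T) * ‖sys.trans (t - T) 0 u‖ + b T * runSup u t := by
  have hτ : 0 ≤ t - T := sub_nonneg.2 hTt
  have hv := sys.shift_mem_of_nonneg hu hτ
  have hfree := hES.2.2 (sys.trans (t - T) 0 u) T hT
  have hforced : ‖sys.trans T 0 (fun s => u (s + (t - T)))‖ ≤ b T * runSup u t := by
    calc ‖sys.trans T 0 (fun s => u (s + (t - T)))‖
        ≤ b T * runSup (fun s => u (s + (t - T))) T := hrob.2.2 _ hv T hT
      _ ≤ b T * runSup u t := by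
        gcongr
        · exact hrob.2.1 T
        · simpa using runSup_shift_le (sys.loc_bdd u hu t) hτ
  rw [sys.trans_eq_trans_zero_add_of_le hu hτ (sub_le_self t hT), sub_sub_cancel]
  exact (norm_add_le _ _).trans (add_le_add hfree hforced)

theorem norm_trans_le_runSup {M σ : ℝ} {b : ℝ → ℝ} (hES : sys.IsES M σ) (hrob : sys.IsRobust b)
    {T : ℝ} (hT : 0 < T) (hq : M * exp (-σ * T) < 1) {u : ℝ → U} (hu : u ∈ sys.inputs)
    {t : ℝ} (ht : 0 ≤ t) :
    ‖sys.trans t 0 u‖ ≤ b T / (1 - M * exp (-σ * T)) * runSup u t := by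
  set q := M * exp (-σ * T)
  have hq0 : 0 ≤ q := mul_nonneg hES.1.le (exp_pos _).le
  have hbT := hrob.2.1 T
  have hK : b T ≤ b T / (1 - q) := le_div_self hbT (by linarith) (by linarith)
  suffices h : ∀ n : ℕ, ∀ t ∈ Set.Icc 0 ((n + 1) * T),
      ‖sys.trans t 0 u‖ ≤ b T / (1 - q) * runSup u t by
    obtain ⟨n, hn⟩ := exists_nat_ge (t / T)
    exact h n t ⟨ht, by rw [div_le_iff₀ hT] at hn; nlinarith⟩
  intro n
  induction n with
  | zero =>
    rintro t ⟨ht, htT⟩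
    rw [Nat.cast_zero, zero_add, one_mul] at htT
    calc ‖sys.trans t 0 u‖ ≤ b t * runSup u t := hrob.2.2 u hu t ht
      _ ≤ b T / (1 - q) * runSup u t := by
        gcongr
        · exact runSup_nonneg u t
        · exact (hrob.1 ht hT.le htT).trans hK
  | succ n ih =>
    rintro t ⟨ht, htn⟩
    rcases le_or_gt t T with htT | hTt
    · exact ih t ⟨ht, htT.trans (by nlinarith [n.cast_nonneg (α := ℝ)])⟩
    have hprev := ih (t - T) ⟨by linarith, by push_cast at htn; linarith⟩
    have hmono := runSup_mono (sys.loc_bdd u hu t) (sub_le_self t hT.le)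
    calc ‖sys.trans t 0 u‖ ≤ q * ‖sys.trans (t - T) 0 u‖ + b T * runSup u t :=
          norm_trans_le_of_le hES hrob hT.le hTt.le hu
      _ ≤ q * (b T / (1 - q) * runSup u t) + b T * runSup u t := by
        gcongr
        exact hprev.trans (by gcongr)
      _ = b T / (1 - q) * runSup u t := by
        field_simp [(by linarith : (1 - q) ≠ 0)]
        ring

lemma gain_le_and_bddAbove {K : ℝ} (hK : 0 ≤ K)
    (h : ∀ t ≥ (0 : ℝ), ∀ u ∈ sys.inputs, ‖sys.out (sys.trans t 0 u)‖ ≤ K * runSup u t) :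
    sys.gain ≤ K ∧ BddAbove {r | ∃ t ≥ (0 : ℝ), ∃ u ∈ sys.inputs,
      runSup u t = 1 ∧ r = ‖sys.out (sys.trans t 0 u)‖} := by
  have hbound : ∀ r ∈ {r | ∃ t ≥ (0 : ℝ), ∃ u ∈ sys.inputs,
      runSup u t = 1 ∧ r = ‖sys.out (sys.trans t 0 u)‖}, r ≤ K := by
    rintro _ ⟨t, ht, u, hu, hsup, rfl⟩
    simpa [hsup] using h t ht u hu
  exact ⟨Real.sSup_le hbound hK, K, hbound⟩

end LinearControlSystem

lemma mul_exp_neg_mul_lt_one {M σ T : ℝ} (hM : 0 < M) (hσ : 0 < σ)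
    (hT : T > (1 / σ) * Real.log M) : M * exp (-σ * T) < 1 := by
  have hlog : Real.log M < σ * T := by
    rwa [gt_iff_lt, one_div_mul_eq_div, div_lt_iff₀' hσ] at hT
  calc M * exp (-σ * T) = exp (Real.log M - σ * T) := by
        rw [sub_eq_add_neg, exp_add, exp_log hM, neg_mul]
    _ < 1 := exp_lt_one_iff.2 (by linarith)

open LinearControlSystem in
/-- Remark 4.2: for an ES, robust linear control system (with output the identity map),
for every `T > (1/σ)·ln M` the minimum IOS-gain satisfies
`γ ≤ ((1 + M·(1 − e^{−σT}))/(1 − M·e^{−σT}))·b(T)`; in particular `γ < +∞`, i.e. the set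
defining `γ` is bounded above. -/
theorem statement_5 {X U : Type*}
    [NormedAddCommGroup X] [NormedSpace ℝ X]
    [NormedAddCommGroup U] [NormedSpace ℝ U]
    (sys : LinearControlSystem X X U) (hout : ∀ x : X, sys.out x = x)
    (M σ : ℝ) (b : ℝ → ℝ) (hES : sys.IsES M σ) (hrob : sys.IsRobust b)
    (T : ℝ) (hT : T > (1 / σ) * Real.log M) :
    sys.gain ≤ (1 + M * (1 - Real.exp (-σ * T))) / (1 - M * Real.exp (-σ * T)) * b T ∧
    BddAbove {r | ∃ t ≥ (0 : ℝ), ∃ u ∈ sys.inputs,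
      runSup u t = 1 ∧ r = ‖sys.out (sys.trans t 0 u)‖} := by
  set q := M * exp (-σ * T)
  set R := (1 + M * (1 - exp (-σ * T))) / (1 - q) * b T
  have hq : q < 1 := mul_exp_neg_mul_lt_one hES.1 hES.2.1 hT
  have hbT := hrob.2.1 T
  have hR : 0 ≤ R :=
    mul_nonneg (div_nonneg (by rw [mul_one_sub]; linarith [hES.1]) (by linarith)) hbT
  refine gain_le_and_bddAbove hR fun t ht u hu => ?_
  rw [hout]
  rcases lt_or_ge M 1 with hM | hM
  · rw [hES.eq_zero_of_lt_one hM (sys.trans t 0 u), norm_zero]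
    exact mul_nonneg hR (runSup_nonneg u t)
  have hTpos : 0 < T :=
    lt_of_le_of_lt (mul_nonneg (one_div_pos.2 hES.2.1).le (Real.log_nonneg hM)) hT
  have hKR : b T / (1 - q) ≤ R := by
    have hexp : exp (-σ * T) ≤ 1 := exp_le_one_iff.2 (by nlinarith [hES.2.1])
    calc b T / (1 - q) = 1 / (1 - q) * b T := by ring
      _ ≤ R := by
        simp only [R]
        gcongr
        exact le_add_of_nonneg_right (mul_nonneg hES.1.le (sub_nonneg.2 hexp))
  calc ‖sys.trans t 0 u‖ ≤ b T / (1 - q) * runSup u t :=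
        norm_trans_le_runSup hES hrob hTpos hq hu ht
    _ ≤ R * runSup u t := by gcongr; exact runSup_nonneg u t
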